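/- arXiv:2111.06320 — 2 statements merged into one kernel-verified Lean document; each statement's English description precedes it below -/
import Mathlib

section
/- Let d ≥ 1 and let K be the free Schrödinger kernel. Then the family {K(t,·)}_{t>0} is an approximate identity at the origin: for every Schwartz function f : ℝ^d → ℂ, the (absolutely convergent) integral ∫_{ℝ^d} K(t,x) f(x) dx tends to f(0) as t → 0⁺. -/
open MeasureTheory Filter

/-- The free Schrödinger kernel `K(t,x) = (4πit)^{-d/2} · exp(i‖x‖²/(4t))`,
where the complex power is the principal branch. -/
noncomputable def schrodingerKernel (d : ℕ) (t : ℝ) (x : EuclideanSpace ℝ (Fin d)) : ℂ :=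
  ((4 * (Real.pi : ℂ) * Complex.I * (t : ℂ)) ^ (-(d : ℂ) / 2)) *
    Complex.exp (Complex.I * ((‖x‖ : ℝ) : ℂ) ^ 2 / (4 * (t : ℂ)))

/-!
For `Re z > 0`, `(4πz)^{-d/2} exp(-‖x‖²/(4z))` is the Fourier transform of the Gaussian
`exp(-4π²z‖ξ‖²)`, so the multiplication formula `∫ 𝓕g · f = ∫ g · 𝓕f` gives
`(4πz)^{-d/2} ∫ exp(-‖x‖²/(4z)) f(x) dx = ∫ exp(-4π²z‖ξ‖²) 𝓕f(ξ) dξ`.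
All these Gaussians have modulus at most `1` on the closed half-plane `Re z ≥ 0`, so by dominated
convergence both sides are continuous there (away from `z = 0` on the left), and the identity
survives at `z = it`, where the left side is `∫ K(t,x) f(x) dx`. The right side is continuous at
`z = 0` too, so it tends to `∫ 𝓕f = f(0)` (Fourier inversion) as `t → 0⁺`.
-/

open Complex Real Topology
open scoped FourierTransform

lemma norm_cexp_neg_mul_sq_le_one {w : ℂ} (hw : 0 ≤ w.re) (r : ℝ) :
    ‖cexp (-w * r ^ 2)‖ ≤ 1 := by
  rw [norm_exp, Real.exp_le_one_iff, ← ofReal_pow, re_mul_ofReal, neg_re]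
  exact mul_nonpos_of_nonpos_of_nonneg (neg_nonpos.2 hw) (sq_nonneg r)

lemma continuousOn_integral_cexp_neg_mul_sq_norm_mul {α : Type*} [NormedAddCommGroup α]
    [MeasurableSpace α] [OpensMeasurableSpace α] {μ : Measure α} {g : α → ℂ}
    (hg : Integrable g μ) :
    ContinuousOn (fun w : ℂ ↦ ∫ x, cexp (-w * ‖x‖ ^ 2) * g x ∂μ) {w | 0 ≤ w.re} := by
  refine continuousOn_of_dominated (bound := fun x ↦ ‖g x‖) (fun w _ ↦ ?_) (fun w hw ↦ ?_)
    hg.norm (ae_of_all _ fun x ↦ ?_)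
  · exact (Continuous.aestronglyMeasurable (by fun_prop)).mul hg.aestronglyMeasurable
  · refine ae_of_all _ fun x ↦ ?_
    rw [norm_mul]
    exact mul_le_of_le_one_left (norm_nonneg _) (norm_cexp_neg_mul_sq_le_one hw _)
  · exact Continuous.continuousOn (by fun_prop)

lemma continuousOn_integral_cexp_neg_four_pi_sq_mul_sq_norm_mul {α : Type*}
    [NormedAddCommGroup α] [MeasurableSpace α] [OpensMeasurableSpace α] {μ : Measure α}
    {g : α → ℂ} (hg : Integrable g μ) :
    ContinuousOn (fun w : ℂ ↦ ∫ x, cexp (-(4 * π ^ 2 * w) * ‖x‖ ^ 2) * g x ∂μ)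
      {w | 0 ≤ w.re} := by
  refine (continuousOn_integral_cexp_neg_mul_sq_norm_mul hg).comp
    (continuousOn_const.mul continuousOn_id) fun w (hw : 0 ≤ w.re) ↦ ?_
  change 0 ≤ (4 * π ^ 2 * w).re
  simp [mul_re, ← ofReal_pow]
  positivity

lemma mem_slitPlane_of_re_nonneg {z : ℂ} (hz : 0 ≤ z.re) (hz0 : z ≠ 0) : z ∈ slitPlane := by
  rw [mem_slitPlane_iff]
  rcases hz.lt_or_eq with hz | hz
  · exact Or.inl hz
  · exact Or.inr fun him ↦ hz0 (Complex.ext hz.symm him)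

section InnerProductSpace

variable {V : Type*} [NormedAddCommGroup V] [InnerProductSpace ℝ V] [FiniteDimensional ℝ V]
  [MeasurableSpace V] [BorelSpace V]

lemma integral_fourier_mul_eq_of_integrable {f g : V → ℂ} (hf : Integrable f)
    (hg : Integrable g) : ∫ ξ, 𝓕 f ξ * g ξ = ∫ x, f x * 𝓕 g x := by
  simpa using! VectorFourier.integral_fourierIntegral_smul_eq_flip (L := innerₗ V)
    Real.continuous_fourierChar continuous_inner hf hg

lemma fourier_cexp_neg_four_pi_sq_mul_sq_norm {z : ℂ} (hz : 0 < z.re) (x : V) :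
    𝓕 (fun ξ : V ↦ cexp (-(4 * π ^ 2 * z) * ‖ξ‖ ^ 2)) x =
      (4 * π * z) ^ (-(Module.finrank ℝ V : ℂ) / 2) * cexp (-(4 * z)⁻¹ * ‖x‖ ^ 2) := by
  have hre : 0 < (4 * π ^ 2 * z).re := by simp [mul_re, ← ofReal_pow]; positivity
  have harg : (4 * π * z).arg ≠ π :=
    slitPlane_arg_ne_pi (mem_slitPlane_iff.2 (.inl (by simp [mul_re]; positivity)))
  rw [fourier_gaussian_innerProductSpace hre,
    show (π : ℂ) / (4 * π ^ 2 * z) = (4 * π * z)⁻¹ by field_simp,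
    inv_cpow _ _ harg, ← cpow_neg]
  congr 2
  · ring
  · field_simp

lemma integral_cexp_neg_inv_mul_sq_norm_mul_eq {f : V → ℂ} (hf : Integrable f) {z : ℂ}
    (hz : 0 < z.re) :
    (4 * π * z) ^ (-(Module.finrank ℝ V : ℂ) / 2) * ∫ x, cexp (-(4 * z)⁻¹ * ‖x‖ ^ 2) * f x =
      ∫ ξ, cexp (-(4 * π ^ 2 * z) * ‖ξ‖ ^ 2) * 𝓕 f ξ := by
  have hre : 0 < (4 * π ^ 2 * z).re := by simp [mul_re, ← ofReal_pow]; positivity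
  have hG : Integrable fun ξ : V ↦ cexp (-(4 * π ^ 2 * z) * ‖ξ‖ ^ 2) := by
    simpa using GaussianFourier.integrable_cexp_neg_mul_sq_norm_add hre 0 (0 : V)
  rw [← integral_const_mul, ← integral_fourier_mul_eq_of_integrable hG hf]
  simp_rw [fourier_cexp_neg_four_pi_sq_mul_sq_norm hz, mul_assoc]

lemma integral_cexp_neg_inv_mul_sq_norm_mul_eq_of_re_nonneg {f : V → ℂ} (hf : Integrable f)
    (hf𝓕 : Integrable (𝓕 f)) {z : ℂ} (hz : 0 ≤ z.re) (hz0 : z ≠ 0) :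
    (4 * π * z) ^ (-(Module.finrank ℝ V : ℂ) / 2) * ∫ x, cexp (-(4 * z)⁻¹ * ‖x‖ ^ 2) * f x =
      ∫ ξ, cexp (-(4 * π ^ 2 * z) * ‖ξ‖ ^ 2) * 𝓕 f ξ := by
  set S : Set ℂ := {w | 0 ≤ w.re} \ {0}
  have hL : ContinuousOn (fun w : ℂ ↦ (4 * π * w) ^ (-(Module.finrank ℝ V : ℂ) / 2) *
      ∫ x, cexp (-(4 * w)⁻¹ * ‖x‖ ^ 2) * f x) S := by
    refine ContinuousOn.mul ?_ ?_
    · refine (continuousOn_const.mul continuousOn_id).cpow_const fun w hw ↦ ?_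
      obtain ⟨hre : 0 ≤ w.re, hw0 : w ≠ 0⟩ := hw
      exact mem_slitPlane_of_re_nonneg (by simp [mul_re]; positivity)
        (mul_ne_zero (by simp [pi_ne_zero]) hw0)
    · refine (continuousOn_integral_cexp_neg_mul_sq_norm_mul hf).comp ?_ fun w hw ↦ ?_
      · exact (continuousOn_const.mul continuousOn_id).inv₀ fun w hw ↦
          mul_ne_zero (by norm_num) hw.2
      · rw [Set.mem_ofPred_eq, inv_re]
        exact div_nonneg (by simpa [mul_re] using hw.1) (normSq_nonneg _)
  refine Set.EqOn.of_subset_closure (fun w hw ↦ integral_cexp_neg_inv_mul_sq_norm_mul_eq hf hw)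
    hL ((continuousOn_integral_cexp_neg_four_pi_sq_mul_sq_norm_mul hf𝓕).mono Set.sdiff_subset)
    (fun w (hw : 0 < w.re) ↦ ⟨hw.le, fun h ↦ by simp_all⟩)
    (Set.sdiff_subset.trans (closure_setOfPred_lt_re 0).symm.subset) ⟨hz, hz0⟩

end InnerProductSpace

lemma schrodingerKernel_eq (d : ℕ) (t : ℝ) (x : EuclideanSpace ℝ (Fin d)) :
    schrodingerKernel d t x =
      (4 * π * (t * I)) ^ (-(d : ℂ) / 2) * cexp (-(4 * (t * I))⁻¹ * ‖x‖ ^ 2) := by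
  rw [schrodingerKernel, mul_inv, mul_inv, inv_I]
  ring_nf

theorem schrodingerKernel_approximate_identity_general (d : ℕ)
    (f : SchwartzMap (EuclideanSpace ℝ (Fin d)) ℂ) :
    Tendsto (fun t : ℝ => ∫ x : EuclideanSpace ℝ (Fin d), schrodingerKernel d t x * f x)
      (nhdsWithin 0 (Set.Ioi 0)) (nhds (f 0)) := by
  have hf𝓕 : Integrable (𝓕 (f : EuclideanSpace ℝ (Fin d) → ℂ)) := (𝓕 f).integrable
  have hR := continuousOn_integral_cexp_neg_four_pi_sq_mul_sq_norm_mul hf𝓕 0 (by simp)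
  have hR0 : ∫ ξ, cexp (-(4 * π ^ 2 * 0) * ‖ξ‖ ^ 2) * 𝓕 (f : EuclideanSpace ℝ (Fin d) → ℂ) ξ =
      f 0 := by
    simpa [Real.fourierInv_eq] using
      f.integrable.fourierInv_fourier_eq hf𝓕 f.continuous.continuousAt (v := 0)
  have hI : Tendsto (fun t : ℝ ↦ (t : ℂ) * I) (𝓝[>] 0) (𝓝[{w | 0 ≤ w.re}] 0) :=
    tendsto_nhdsWithin_iff.2 ⟨((continuous_ofReal.mul continuous_const).tendsto' 0 0
      (by simp)).mono_left nhdsWithin_le_nhds, Eventually.of_forall fun t ↦ by simp⟩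
  refine (hR0 ▸ hR.tendsto.comp hI).congr' ?_
  filter_upwards [self_mem_nhdsWithin] with t (ht : 0 < t)
  have hboundary := integral_cexp_neg_inv_mul_sq_norm_mul_eq_of_re_nonneg f.integrable hf𝓕
    (z := t * I) (by simp) (by simp [ht.ne'])
  rw [finrank_euclideanSpace_fin] at hboundary
  rw [Function.comp_apply, ← hboundary, ← integral_const_mul]
  simp_rw [schrodingerKernel_eq, mul_assoc]

/-- The family `{K(t,·)}_{t>0}` is an approximate identity at the origin: for every
Schwartz function `f : ℝ^d → ℂ`, `∫ K(t,x) f(x) dx → f(0)` as `t → 0⁺`. -/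
theorem schrodingerKernel_approximate_identity (d : ℕ) (hd : 1 ≤ d)
    (f : SchwartzMap (EuclideanSpace ℝ (Fin d)) ℂ) :
    Tendsto (fun t : ℝ => ∫ x : EuclideanSpace ℝ (Fin d), schrodingerKernel d t x * f x)
      (nhdsWithin 0 (Set.Ioi 0)) (nhds (f 0)) :=
  schrodingerKernel_approximate_identity_general d f
end

section
/- Let d ≥ 1 and let g : ℝ × ℝ^d → ℂ be a Schwartz function. Then ω · ∫_{[0,∞) × ℝ^d} g(t,k) e^{it(‖k‖² − ω)} dk dt tends to −i · ∫_{ℝ^d} g(0,k) dk as ω → −∞. Consequently, if ∫_{ℝ^d} g(0,k) dk ≠ 0, the function ω ↦ ∫_{[0,∞) × ℝ^d} g(t,k) e^{it(‖k‖² − ω)} dk dt is not rapidly decreasing in the direction ω → −∞. -/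
/-!
For `ω < 0` put `b = ‖k‖² - ω > 0`. Integrating by parts in `t`,
`b ∫₀^∞ g(t,k) e^{itb} dt = i (g(0,k) + ∫₀^∞ ∂ₜg(t,k) e^{itb} dt)`.
As `ω → -∞` we have `ω / b → -1`, and the last integral tends to `0` by the Riemann–Lebesgue
lemma, so `ω ∫₀^∞ g(t,k) e^{itb} dt → -i g(0,k)` for every `k`. Since `|ω| ≤ b`, the same identity
bounds this by `‖g(0,k)‖ + ∫ ‖∂ₜg(t,k)‖ dt`, which is integrable in `k`; after exchanging the
`t`- and `k`-integrals, dominated convergence gives the limit.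
-/

open MeasureTheory Filter Set Complex Topology

lemma norm_cexp_I_mul_ofReal_mul_ofReal (t b : ℝ) : ‖cexp (I * t * b)‖ = 1 := by
  rw [show I * t * b = ((t * b : ℝ) : ℂ) * I by push_cast; ring, norm_exp_ofReal_mul_I]

lemma MeasureTheory.Integrable.mul_cexp_I_mul_ofReal_mul_ofReal {α : Type*} [MeasurableSpace α]
    {μ : Measure α} {f : α → ℂ} {u v : α → ℝ} (hf : Integrable f μ) (hu : Measurable u)
    (hv : Measurable v) : Integrable (fun x => f x * cexp (I * u x * v x)) μ :=
  hf.mul_bdd (by fun_prop) (.of_forall fun x => (norm_cexp_I_mul_ofReal_mul_ofReal _ _).le)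

lemma hasDerivAt_cexp_I_mul_ofReal_mul_ofReal (t b : ℝ) :
    HasDerivAt (fun s : ℝ => cexp (I * s * b)) (I * b * cexp (I * t * b)) t := by
  simpa [mul_comm] using (((hasDerivAt_id t).ofReal_comp.const_mul I).mul_const (b : ℂ)).cexp

lemma tendsto_integral_Ioi_mul_cexp_atTop (f : ℝ → ℂ) :
    Tendsto (fun b : ℝ => ∫ t in Ioi 0, f t * cexp (I * t * b)) atTop (𝓝 0) := by
  have hfreq : Tendsto (fun b : ℝ => -(b / (2 * Real.pi))) atTop (cocompact ℝ) :=
    (tendsto_neg_atTop_atBot.comp (tendsto_id.atTop_div_const Real.two_pi_pos)).mono_right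
      atBot_le_cocompact
  refine ((Real.tendsto_integral_exp_smul_cocompact ((Ioi 0).indicator f)).comp hfreq).congr
    fun b => ?_
  rw [Function.comp_apply, ← integral_indicator measurableSet_Ioi]
  congr 1 with t
  by_cases ht : t ∈ Ioi (0 : ℝ)
  · have hpi : (2 * Real.pi : ℂ) ≠ 0 := by exact_mod_cast Real.two_pi_pos.ne'
    simp only [indicator_of_mem ht, Circle.smul_def, Real.fourierChar_apply, smul_eq_mul]
    rw [mul_comm]
    push_cast
    field_simp [hpi]
  · simp [ht]

namespace SchwartzMap

section Slices

variable {E F V : Type*} [NormedAddCommGroup E] [NormedSpace ℝ E] [NormedAddCommGroup F]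
  [NormedSpace ℝ F] [NormedAddCommGroup V] [NormedSpace ℝ V]

noncomputable def compProdMkLeft (f : 𝓢(E × F, V)) (y : F) : 𝓢(E, V) :=
  compCLM ℝ (g := fun x => (x, y))
    (by
      convert (ContinuousLinearMap.inl ℝ E F).hasTemperateGrowth.add
        (Function.HasTemperateGrowth.const ((0 : E), y)) using 1
      ext x <;> simp)
    ⟨1, 1, fun x => by simpa using (norm_fst_le (x, y)).trans (le_add_of_nonneg_left zero_le_one)⟩ f

noncomputable def compProdMkRight (f : 𝓢(E × F, V)) (x : E) : 𝓢(F, V) :=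
  compCLM ℝ (g := fun y => (x, y))
    (by
      convert (ContinuousLinearMap.inr ℝ E F).hasTemperateGrowth.add
        (Function.HasTemperateGrowth.const (x, (0 : F))) using 1
      ext y <;> simp)
    ⟨1, 1, fun y => by simpa using (norm_snd_le (x, y)).trans (le_add_of_nonneg_left zero_le_one)⟩ f

@[simp]
lemma compProdMkLeft_apply (f : 𝓢(E × F, V)) (y : F) (x : E) : f.compProdMkLeft y x = f (x, y) :=
  rfl

open LineDeriv in
lemma deriv_compProdMkLeft (f : 𝓢(ℝ × F, V)) (y : F) (t : ℝ) :
    deriv (f.compProdMkLeft y) t = ∂_{((1 : ℝ), (0 : F))} f (t, y) :=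
  (f.differentiableAt.hasFDerivAt.comp_hasDerivAt t
    ((hasDerivAt_id t).prodMk (hasDerivAt_const t y))).deriv

end Slices

lemma ofReal_mul_integral_Ioi_mul_cexp (f : 𝓢(ℝ, ℂ)) (b : ℝ) :
    b * ∫ t in Ioi 0, f t * cexp (I * t * b) =
      I * (f 0 + ∫ t in Ioi 0, deriv f t * cexp (I * t * b)) := by
  have hint : ∀ φ : 𝓢(ℝ, ℂ), Integrable (fun t => φ t * cexp (I * t * b)) :=
    fun φ => φ.integrable.mul_cexp_I_mul_ofReal_mul_ofReal measurable_id measurable_const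
  have hderiv (t : ℝ) : HasDerivAt (fun t => f t * cexp (I * t * b))
      (deriv f t * cexp (I * t * b) + I * b * (f t * cexp (I * t * b))) t :=
    ((f.hasDerivAt t).mul (hasDerivAt_cexp_I_mul_ofReal_mul_ofReal t b)).congr_deriv (by ring)
  have hlim : Tendsto (fun t => f t * cexp (I * t * b)) atTop (𝓝 0) := by
    rw [tendsto_zero_iff_norm_tendsto_zero]
    simpa only [norm_mul, norm_cexp_I_mul_ofReal_mul_ofReal, mul_one, norm_zero] using
      (f.tendsto_cocompact.mono_left atTop_le_cocompact).norm
  have hint_deriv := hint (derivCLM ℝ ℂ f)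
  simp only [derivCLM_apply] at hint_deriv
  have hftc := integral_Ioi_of_hasDerivAt_of_tendsto' (a := 0) (fun t _ => hderiv t)
    (hint_deriv.add ((hint f).const_mul (I * b))).integrableOn hlim
  rw [integral_add hint_deriv.integrableOn ((hint f).const_mul (I * b)).integrableOn,
    integral_const_mul] at hftc
  simp only [ofReal_zero, mul_zero, zero_mul, Complex.exp_zero] at hftc
  linear_combination (-I) * hftc + (∫ t in Ioi 0, f t * cexp (I * t * b)) * b * I_sq

lemma norm_ofReal_mul_integral_Ioi_mul_cexp_le (f : 𝓢(ℝ, ℂ)) {c ω : ℝ} (hc : 0 ≤ c)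
    (hω : ω ≤ 0) :
    ‖(ω : ℂ) * ∫ t in Ioi 0, f t * cexp (I * t * (c - ω : ℝ))‖ ≤ ‖f 0‖ + ∫ t, ‖deriv f t‖ := by
  have hderiv_int : Integrable (fun t => ‖deriv f t‖) := (derivCLM ℝ ℂ f).integrable.norm
  calc ‖(ω : ℂ) * ∫ t in Ioi 0, f t * cexp (I * t * (c - ω : ℝ))‖
      ≤ ‖((c - ω : ℝ) : ℂ) * ∫ t in Ioi 0, f t * cexp (I * t * (c - ω : ℝ))‖ := by
        simp only [norm_mul, norm_real, Real.norm_eq_abs]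
        refine mul_le_mul_of_nonneg_right ?_ (norm_nonneg _)
        rw [abs_of_nonpos hω, abs_of_nonneg (by linarith)]
        linarith
    _ = ‖f 0 + ∫ t in Ioi 0, deriv f t * cexp (I * t * (c - ω : ℝ))‖ := by
        rw [ofReal_mul_integral_Ioi_mul_cexp, norm_mul, norm_I, one_mul]
    _ ≤ ‖f 0‖ + ∫ t in Ioi 0, ‖deriv f t‖ := by
        grw [norm_add_le, norm_integral_le_integral_norm]
        simp only [norm_mul, norm_cexp_I_mul_ofReal_mul_ofReal, mul_one, le_refl]
    _ ≤ ‖f 0‖ + ∫ t, ‖deriv f t‖ := by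
        grw [setIntegral_le_integral hderiv_int (.of_forall fun t => norm_nonneg _)]

lemma tendsto_ofReal_mul_integral_Ioi_mul_cexp_atBot (f : 𝓢(ℝ, ℂ)) (c : ℝ) :
    Tendsto (fun ω : ℝ => (ω : ℂ) * ∫ t in Ioi 0, f t * cexp (I * t * (c - ω : ℝ))) atBot
      (𝓝 (-I * f 0)) := by
  have hfreq : Tendsto (fun ω : ℝ => c - ω) atBot atTop := by
    simpa only [sub_eq_add_neg] using tendsto_atTop_add_const_left _ c tendsto_neg_atBot_atTop
  have hratio : Tendsto (fun ω : ℝ => ((ω / (c - ω) : ℝ) : ℂ)) atBot (𝓝 (-1 : ℝ)) := by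
    refine tendsto_ofReal_iff.mpr ?_
    have h : Tendsto (fun ω : ℝ => -1 + c / (c - ω)) atBot (𝓝 (-1)) := by
      simpa using ((tendsto_const_nhds (x := c)).div_atTop hfreq).const_add (-1)
    refine h.congr' ?_
    filter_upwards [eventually_lt_atBot c] with ω hω
    field_simp [(sub_pos.mpr hω).ne']
    ring
  have hlim := hratio.mul ((((tendsto_integral_Ioi_mul_cexp_atTop (deriv f)).comp
    hfreq).const_add (f 0)).const_mul I)
  rw [add_zero, ofReal_neg, ofReal_one, neg_one_mul, ← neg_mul] at hlim
  refine hlim.congr' ?_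
  filter_upwards [eventually_lt_atBot c] with ω hω
  have hne : ((c - ω : ℝ) : ℂ) ≠ 0 := by exact_mod_cast (sub_pos.mpr hω).ne'
  rw [Function.comp_apply, ← ofReal_mul_integral_Ioi_mul_cexp, ofReal_div, ← mul_assoc,
    div_mul_cancel₀ _ hne]

section Dispersive

variable {F : Type*} [NormedAddCommGroup F] [NormedSpace ℝ F] [FiniteDimensional ℝ F]
  [MeasureSpace F] [BorelSpace F] [(volume : Measure F).IsAddHaarMeasure]

open LineDeriv in
theorem tendsto_ofReal_mul_integral_Ici_integral_mul_cexp_atBot (g : 𝓢(ℝ × F, ℂ)) {p : F → ℝ}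
    (hp : Measurable p) (hp0 : 0 ≤ p) :
    Tendsto (fun ω : ℝ => (ω : ℂ) *
        ∫ t in Ici (0 : ℝ), ∫ k, g (t, k) * cexp (I * t * (p k - ω : ℝ)))
      atBot (𝓝 (-I * ∫ k, g (0, k))) := by
  have hint (ω : ℝ) : Integrable (fun x : ℝ × F => g x * cexp (I * x.1 * (p x.2 - ω : ℝ)))
      ((volume.restrict (Ioi 0)).prod volume) := by
    rw [Measure.restrict_prod_eq_prod_univ]
    exact (g.integrable.mul_cexp_I_mul_ofReal_mul_ofReal measurable_fst
      ((hp.comp measurable_snd).sub_const ω)).restrict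
  have hswap (ω : ℝ) : ∫ t in Ici (0 : ℝ), ∫ k, g (t, k) * cexp (I * t * (p k - ω : ℝ)) =
      ∫ k, ∫ t in Ioi (0 : ℝ), g (t, k) * cexp (I * t * (p k - ω : ℝ)) := by
    rw [integral_Ici_eq_integral_Ioi]
    exact integral_integral_swap (hint ω)
  rw [← integral_const_mul]
  refine Tendsto.congr (f₁ := fun ω : ℝ =>
      ∫ k, (ω : ℂ) * ∫ t in Ioi 0, g (t, k) * cexp (I * t * (p k - ω : ℝ)))
    (fun ω => by rw [hswap, integral_const_mul]) ?_
  refine tendsto_integral_filter_of_dominated_convergence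
    (fun k => ‖g (0, k)‖ + ∫ t, ‖∂_{((1 : ℝ), (0 : F))} g (t, k)‖)
    (.of_forall fun ω => ((hint ω).integral_prod_right.const_mul _).aestronglyMeasurable) ?_
    ((g.compProdMkRight 0).integrable.norm.add
      (∂_{((1 : ℝ), (0 : F))} g).integrable.integral_norm_prod_right) ?_
  · filter_upwards [eventually_le_atBot 0] with ω hω
    refine .of_forall fun k => ?_
    simpa only [compProdMkLeft_apply, deriv_compProdMkLeft] using
      (g.compProdMkLeft k).norm_ofReal_mul_integral_Ioi_mul_cexp_le (hp0 k) hω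
  · refine .of_forall fun k => ?_
    simpa only [compProdMkLeft_apply] using
      (g.compProdMkLeft k).tendsto_ofReal_mul_integral_Ioi_mul_cexp_atBot (p k)

end Dispersive

end SchwartzMap

theorem schrodinger_wavefront_not_rapidly_decreasing_general (d : ℕ)
    (g : SchwartzMap (ℝ × EuclideanSpace ℝ (Fin d)) ℂ) :
    Tendsto (fun ω : ℝ => (ω : ℂ) *
        ∫ t in Set.Ici (0 : ℝ), ∫ k : EuclideanSpace ℝ (Fin d),
          g (t, k) * Complex.exp (Complex.I * (t : ℂ) * ((‖k‖ ^ 2 - ω : ℝ) : ℂ)))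
      atBot (nhds (-Complex.I * ∫ k : EuclideanSpace ℝ (Fin d), g (0, k))) ∧
    ((∫ k : EuclideanSpace ℝ (Fin d), g (0, k)) ≠ 0 →
      ¬ Tendsto (fun ω : ℝ => (ω : ℂ) *
          ∫ t in Set.Ici (0 : ℝ), ∫ k : EuclideanSpace ℝ (Fin d),
            g (t, k) * Complex.exp (Complex.I * (t : ℂ) * ((‖k‖ ^ 2 - ω : ℝ) : ℂ)))
        atBot (nhds 0)) := by
  have hlim := g.tendsto_ofReal_mul_integral_Ici_integral_mul_cexp_atBot
    (p := fun k => ‖k‖ ^ 2) (by fun_prop) fun k => by positivity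
  refine ⟨hlim, fun hne hzero => hne ?_⟩
  simpa [I_ne_zero] using tendsto_nhds_unique hlim hzero

/-- For a Schwartz function `g : ℝ × ℝ^d → ℂ`,
`ω · ∫_{[0,∞)×ℝ^d} g(t,k) e^{it(‖k‖²−ω)} dk dt → −i ∫ g(0,k) dk` as `ω → −∞`.
Consequently, if `∫ g(0,k) dk ≠ 0`, the function
`ω ↦ ∫_{[0,∞)×ℝ^d} g(t,k) e^{it(‖k‖²−ω)} dk dt` is not rapidly decreasing as `ω → −∞`. -/
theorem schrodinger_wavefront_not_rapidly_decreasing (d : ℕ) (hd : 1 ≤ d)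
    (g : SchwartzMap (ℝ × EuclideanSpace ℝ (Fin d)) ℂ) :
    Tendsto (fun ω : ℝ => (ω : ℂ) *
        ∫ t in Set.Ici (0 : ℝ), ∫ k : EuclideanSpace ℝ (Fin d),
          g (t, k) * Complex.exp (Complex.I * (t : ℂ) * ((‖k‖ ^ 2 - ω : ℝ) : ℂ)))
      atBot (nhds (-Complex.I * ∫ k : EuclideanSpace ℝ (Fin d), g (0, k))) ∧
    ((∫ k : EuclideanSpace ℝ (Fin d), g (0, k)) ≠ 0 →
      ¬ Tendsto (fun ω : ℝ => (ω : ℂ) *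
          ∫ t in Set.Ici (0 : ℝ), ∫ k : EuclideanSpace ℝ (Fin d),
            g (t, k) * Complex.exp (Complex.I * (t : ℂ) * ((‖k‖ ^ 2 - ω : ℝ) : ℂ)))
        atBot (nhds 0)) :=
  schrodinger_wavefront_not_rapidly_decreasing_general d g
end
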